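/- Visible steps of the monitored system determine the residual monitor: for every closed guarded φ ∈ SHMLnf, systems p, p', transducer e' and action a ∈ Act, if ⟦φ⟧e[p] -a-> e'[p'] then p -a-> p' and e' = ⟦after(φ, a)⟧e. -/

import Mathlib

set_option autoImplicit false

/-- A labelled transition system over observable actions `Act`;
`none` plays the role of the silent action τ. -/
structure LTS (Act : Type) where
  S : Type
  Tr : S → Option Act → S → Prop

namespace Enf

open scoped Classical

variable {Act : Type}

/-- Zero or more silent steps. -/
def TauStar (L : LTS Act) : L.S → L.S → Prop :=
  Relation.ReflTransGen (fun p q => L.Tr p none q)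

/-- The weak transition `p =a=> q`. -/
def WStep (L : LTS Act) (p : L.S) (a : Act) (q : L.S) : Prop :=
  ∃ p₁ p₂, TauStar L p p₁ ∧ L.Tr p₁ (some a) p₂ ∧ TauStar L p₂ q

/-- Weak trace `p =t=> q`. -/
inductive WTrace (L : LTS Act) : L.S → List Act → L.S → Prop
  | nil {p q : L.S} : TauStar L p q → WTrace L p [] q
  | cons {p r q : L.S} {a : Act} {t : List Act} :
      WStep L p a r → WTrace L r t q → WTrace L p (a :: t) q

/-- SHML formulas: truth, falsehood, fixpoint variables, finite conjunctions,
modalities `[η]φ` (a guard set of actions together with an action-indexed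
continuation, representing the symbolic action and the matching substitutions),
and greatest fixpoints. -/
inductive Frm (Act : Type) : Type where
  | tt : Frm Act
  | ff : Frm Act
  | var : ℕ → Frm Act
  | conj : (n : ℕ) → (Fin n → Frm Act) → Frm Act
  | box : Set Act → (Act → Frm Act) → Frm Act
  | max : ℕ → Frm Act → Frm Act

namespace Frm

/-- Free fixpoint variables. -/
def fv : Frm Act → Set ℕ
  | .tt => ∅
  | .ff => ∅
  | .var X => {X}
  | .conj _ f => ⋃ i, fv (f i)
  | .box G k => ⋃ a ∈ G, fv (k a)
  | .max X φ => fv φ \ {X}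

def Closed (φ : Frm Act) : Prop := fv φ = ∅

/-- Substitution `φ[ψ/X]` (of a closed formula `ψ`). -/
def subst : Frm Act → ℕ → Frm Act → Frm Act
  | .tt, _, _ => .tt
  | .ff, _, _ => .ff
  | .var Y, X, ψ => if Y = X then ψ else .var Y
  | .conj n f, X, ψ => .conj n (fun i => subst (f i) X ψ)
  | .box G k, X, ψ => .box G (fun a => subst (k a) X ψ)
  | .max Y φ, X, ψ => if Y = X then .max Y φ else .max Y (subst φ X ψ)

/-- The normal-form fragment SHMLnf: conjunctions are conjunctions of
modalities with pairwise-disjoint guards, and each greatest fixpoint binds a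
variable occurring free in its body. -/
inductive IsNF : Frm Act → Prop
  | tt : IsNF .tt
  | ff : IsNF .ff
  | var (X : ℕ) : IsNF (.var X)
  | conj (n : ℕ) (G : Fin n → Set Act) (k : Fin n → Act → Frm Act)
      (hdisj : ∀ i j : Fin n, i ≠ j → ∀ a : Act, a ∈ G i → a ∉ G j)
      (hk : ∀ i : Fin n, ∀ a ∈ G i, IsNF (k i a)) :
      IsNF (.conj n fun i => .box (G i) (k i))
  | max (X : ℕ) (φ : Frm Act) (hfree : X ∈ fv φ) (hφ : IsNF φ) : IsNF (.max X φ)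

/-- `gvar X φ`: the variable `X` does not occur unguarded (i.e. outside every
modality) in `φ`. -/
def gvar (X : ℕ) : Frm Act → Prop
  | .tt => True
  | .ff => True
  | .var Y => Y ≠ X
  | .conj _ f => ∀ i, gvar X (f i)
  | .box _ _ => True
  | .max Y φ => Y = X ∨ gvar X φ

/-- A formula is guarded if every occurrence of a fixpoint variable lies
beneath a modality. -/
def Guarded : Frm Act → Prop
  | .tt => True
  | .ff => True
  | .var _ => True
  | .conj _ f => ∀ i, Guarded (f i)
  | .box G k => ∀ a ∈ G, Guarded (k a)
  | .max X φ => gvar X φ ∧ Guarded φ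

/-- Number of top-level greatest-fixpoint binders. -/
def topMax : Frm Act → ℕ
  | .max _ φ => topMax φ + 1
  | _ => 0

end Frm

/-- Denotational semantics of (possibly open) formulas, relative to an
environment mapping fixpoint variables to sets of states; `max` is interpreted
as the greatest fixpoint of the induced monotone map. -/
def sem (L : LTS Act) : Frm Act → (ℕ → Set L.S) → Set L.S
  | .tt, _ => Set.univ
  | .ff, _ => ∅
  | .var X, ρ => ρ X
  | .conj _ f, ρ => ⋂ i, sem L (f i) ρ
  | .box G k, ρ => {p | ∀ a ∈ G, ∀ q, WStep L p a q → q ∈ sem L (k a) ρ}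
  | .max X φ, ρ => ⋃₀ {S | S ⊆ sem L φ (Function.update ρ X S)}

/-- Semantics of closed formulas. -/
def Sem (L : LTS Act) (φ : Frm Act) : Set L.S := sem L φ fun _ => ∅

/-- Satisfiability. -/
def SatIn (L : LTS Act) (φ : Frm Act) : Prop := (Sem L φ).Nonempty

/-- The violation relation `p ⊨v^t φ`, defined as the least relation closed
under the given rules. -/
inductive Viol (L : LTS Act) : L.S → List Act → Frm Act → Prop
  | ff (p : L.S) : Viol L p [] .ff
  | conj {p : L.S} {t : List Act} {n : ℕ} {f : Fin n → Frm Act} (j : Fin n) :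
      Viol L p t (f j) → Viol L p t (.conj n f)
  | box {p p' : L.S} {t : List Act} {a : Act} {G : Set Act} {k : Act → Frm Act} :
      a ∈ G → WStep L p a p' → Viol L p' t (k a) → Viol L p (a :: t) (.box G k)
  | max {p : L.S} {t : List Act} {X : ℕ} {φ : Frm Act} :
      Viol L p t (Frm.subst φ X (.max X φ)) → Viol L p t (.max X φ)

/-- Transducers (enforcement monitors): identity, symbolic transformation
prefixes (a guard set of extended input actions, with `none` standing for the
insertion pattern •, an output per matched input, with `none` standing for τ,
and a continuation per matched input), finite selections, recursion, and
recursion variables. -/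
inductive Trn (Act : Type) : Type where
  | id : Trn Act
  | prf : Set (Option Act) → (Option Act → Option Act) → (Option Act → Trn Act) → Trn Act
  | sel : (n : ℕ) → (Fin n → Trn Act) → Trn Act
  | fix : ℕ → Trn Act → Trn Act
  | var : ℕ → Trn Act

namespace Trn

def tsubst : Trn Act → ℕ → Trn Act → Trn Act
  | .id, _, _ => .id
  | .prf G out k, x, s => .prf G out fun γ => tsubst (k γ) x s
  | .sel n f, x, s => .sel n fun i => tsubst (f i) x s
  | .fix y e, x, s => if y = x then .fix y e else .fix y (tsubst e x s)
  | .var y, x, s => if y = x then s else .var y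

end Trn

/-- Transducer transitions: labels are pairs (input, output) where input
`none` is the insertion pattern • and output `none` is τ. -/
inductive TStep : Trn Act → Option Act × Option Act → Trn Act → Prop
  | id (a : Act) : TStep .id (some a, some a) .id
  | prf {G : Set (Option Act)} {out : Option Act → Option Act}
      {k : Option Act → Trn Act} {γ : Option Act} (h : γ ∈ G) :
      TStep (.prf G out k) (γ, out γ) (k γ)
  | sel {n : ℕ} {f : Fin n → Trn Act} {l : Option Act × Option Act}
      {e' : Trn Act} (i : Fin n) (h : TStep (f i) l e') :
      TStep (.sel n f) l e'
  | fix {x : ℕ} {e : Trn Act} {l : Option Act × Option Act} {e' : Trn Act}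
      (h : TStep (Trn.tsubst e x (.fix x e)) l e') :
      TStep (.fix x e) l e'

/-- Instrumentation of a transducer on a system. -/
inductive IStep (L : LTS Act) : Trn Act × L.S → Option Act → Trn Act × L.S → Prop
  | trn {e e' : Trn Act} {p p' : L.S} {a : Act} {μ : Option Act} :
      L.Tr p (some a) p' → TStep e (some a, μ) e' → IStep L (e, p) μ (e', p')
  | asy {e : Trn Act} {p p' : L.S} :
      L.Tr p none p' → IStep L (e, p) none (e, p')
  | ins {e e' : Trn Act} {p : L.S} {μ : Option Act} :
      TStep e (none, μ) e' → IStep L (e, p) μ (e', p)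
  | ter {e : Trn Act} {p p' : L.S} {a : Act} :
      L.Tr p (some a) p' →
      (∀ μ e', ¬ TStep e (some a, μ) e') →
      (∀ μ e', ¬ TStep e (none, μ) e') →
      IStep L (e, p) (some a) (Trn.id, p')

/-- The LTS of monitored systems `e[p]`. -/
def instLTS (L : LTS Act) : LTS Act := ⟨Trn Act × L.S, IStep L⟩

/-- Strong bisimulations between (the state spaces of) two LTSs. -/
def IsBisim (L₁ L₂ : LTS Act) (R : L₁.S → L₂.S → Prop) : Prop :=
  ∀ s r, R s r →
    (∀ μ s', L₁.Tr s μ s' → ∃ r', L₂.Tr r μ r' ∧ R s' r') ∧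
    (∀ μ r', L₂.Tr r μ r' → ∃ s', L₁.Tr s μ s' ∧ R s' r')

/-- Strong bisimilarity. -/
def Bisim (L₁ L₂ : LTS Act) (s : L₁.S) (r : L₂.S) : Prop :=
  ∃ R, IsBisim L₁ L₂ R ∧ R s r

/-- The synthesis function `⟦-⟧e` from SHMLnf formulas to transducers:
formula variable `X` becomes monitor variable `X+1`; `tt` and `ff` become the
identity monitor; `max X.φ` becomes the corresponding recursive monitor; and a
normalised conjunction of modalities becomes a recursive selection (on the
fresh variable `0`) of symbolic prefixes that suppress (output τ, continue as
the recursion variable) actions whose continuation formula is `ff` and pass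
through all other matched actions, continuing with the synthesis of the
respective continuation formula. -/
noncomputable def synth : Frm Act → Trn Act
  | .tt => .id
  | .ff => .id
  | .var X => .var (X + 1)
  | .max X φ => .fix (X + 1) (synth φ)
  | .box G k =>
      .prf {γ | ∃ a ∈ G, γ = some a}
        (fun γ =>
          match γ with
          | some a => if k a = Frm.ff then none else some a
          | none => none)
        (fun γ =>
          match γ with
          | some a => if k a = Frm.ff then Trn.var 0 else synth (k a)
          | none => .id)
  | .conj n f => .fix 0 (.sel n fun i => synth (f i))

/-- Fuelled residual function (the fuel is consumed by fixpoint unfoldings;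
on guarded closed SHMLnf formulas `topMax φ + 1` units of fuel suffice). -/
noncomputable def afterFuel : ℕ → Frm Act → Act → Frm Act
  | 0, _, _ => .tt
  | n + 1, φ, a =>
    match φ with
    | .max X ψ => afterFuel n (Frm.subst ψ X (.max X ψ)) a
    | .conj m f =>
        if h : ∃ i : Fin m, ∃ G : Set Act, ∃ k : Act → Frm Act,
            f i = Frm.box G k ∧ a ∈ G
        then h.choose_spec.choose_spec.choose a
        else .tt
    | ψ => ψ

/-- The residual `after(φ, a)` of a guarded closed SHMLnf formula. -/
noncomputable def after (φ : Frm Act) (a : Act) : Frm Act :=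
  afterFuel (Frm.topMax φ + 1) φ a

/-- Satisfaction relations (the coinductive rules of `⊨s`). -/
def IsSatRel (L : LTS Act) (R : L.S → Frm Act → Prop) : Prop :=
  (∀ p, ¬ R p .ff) ∧
  (∀ p (n : ℕ) (f : Fin n → Frm Act), R p (.conj n f) → ∀ i, R p (f i)) ∧
  (∀ p (G : Set Act) (k : Act → Frm Act), R p (.box G k) →
      ∀ a ∈ G, ∀ q, WStep L p a q → R q (k a)) ∧
  (∀ p (X : ℕ) (φ : Frm Act), R p (.max X φ) → R p (Frm.subst φ X (.max X φ)))

/-- The largest satisfaction relation `⊨s`. -/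
def SatCo (L : LTS Act) (p : L.S) (φ : Frm Act) : Prop :=
  ∃ R, IsSatRel L R ∧ R p φ

/-!
`⟦max X.ψ⟧e = rec x.⟦ψ⟧e` has exactly the transitions of its unfolding, which is
`⟦ψ[max X.ψ/X]⟧e`, and `after` unfolds `max X.ψ` the same way. Guardedness makes the number of
top-level fixpoints drop under unfolding, so every closed guarded SHMLnf formula may be replaced,
for both purposes, by `tt`, `ff` or a conjunction of modalities with disjoint guards. For these
the claim is read off directly: a step of `⟦⋀ᵢ[ηᵢ]φᵢ⟧e` with visible output `a` passes `a`
through and continues as `⟦φⱼσ_a⟧e`, and when no guard matches `a` the instrumentation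
terminates into `id = ⟦tt⟧e`.
-/

namespace Frm

theorem fv_subst_of_closed {χ : Frm Act} (hχ : χ.Closed) (X : ℕ) (φ : Frm Act) :
    fv (subst φ X χ) = fv φ \ {X} := by
  have hfv : fv χ = ∅ := hχ
  induction φ with
  | tt | ff => simp [subst, fv]
  | var Y =>
    by_cases h : Y = X
    · simp [subst, fv, h, hfv]
    · simp only [subst, if_neg h, fv]
      exact (Set.sdiff_singleton_eq_self (s := {Y}) (Ne.symm h)).symm
  | conj n f ih => simp only [subst, fv, ih, Set.iUnion_sdiff]
  | box G k ih => simp only [subst, fv, ih, Set.iUnion_sdiff]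
  | max Y φ ih =>
    by_cases h : Y = X
    · subst h; simp [subst, fv]
    · ext; simp [subst, fv, h, ih]; tauto

theorem subst_eq_ff_iff {χ : Frm Act} (hχ : χ ≠ .ff) (X : ℕ) (φ : Frm Act) :
    subst φ X χ = .ff ↔ φ = .ff := by
  cases φ with
  | var Y => by_cases h : Y = X <;> simp [subst, h, hχ]
  | max Y φ => by_cases h : Y = X <;> simp [subst, h]
  | _ => simp [subst]

theorem gvar_of_not_mem_fv {Y : ℕ} {χ : Frm Act} (h : Y ∉ fv χ) : gvar Y χ := by
  induction χ with
  | tt | ff | box => trivial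
  | var Z => simpa [fv, gvar, eq_comm] using h
  | conj n f ih =>
    simp only [fv, Set.mem_iUnion, not_exists] at h
    exact fun i => ih i (h i)
  | max Z χ ih =>
    by_cases hZ : Z = Y
    · exact Or.inl hZ
    · refine Or.inr (ih fun hY => h ⟨hY, ?_⟩)
      simpa [eq_comm] using hZ

theorem gvar.subst {Y : ℕ} {χ : Frm Act} (hχ : Y ∉ fv χ) (X : ℕ) {φ : Frm Act}
    (h : gvar Y φ) : gvar Y (subst φ X χ) := by
  induction φ with
  | tt | ff | box => trivial
  | var Z =>
    by_cases hZ : Z = X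
    · simpa [Frm.subst, hZ] using gvar_of_not_mem_fv hχ
    · simpa [Frm.subst, hZ] using h
  | conj n f ih => exact fun i => ih i (h i)
  | max Z φ ih =>
    by_cases hZ : Z = X
    · simpa [Frm.subst, hZ] using h
    · simp only [Frm.subst, if_neg hZ]
      exact h.imp_right ih

theorem Guarded.subst {χ : Frm Act} (hχc : χ.Closed) (hχg : χ.Guarded) (X : ℕ)
    {φ : Frm Act} (h : φ.Guarded) : (subst φ X χ).Guarded := by
  have hfv : fv χ = ∅ := hχc
  induction φ with
  | tt | ff => trivial
  | var Z => by_cases hZ : Z = X <;> simp [Frm.subst, hZ, hχg, Guarded]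
  | conj n f ih => exact fun i => ih i (h i)
  | box G k ih => exact fun a ha => ih a (h a ha)
  | max Z φ ih =>
    by_cases hZ : Z = X
    · simpa [Frm.subst, hZ] using h
    · simp only [Frm.subst, if_neg hZ]
      exact ⟨h.1.subst (by simp [hfv]) X, ih h.2⟩

theorem IsNF.subst {χ : Frm Act} (hχc : χ.Closed) (hχ : χ.IsNF) (X : ℕ)
    {φ : Frm Act} (h : φ.IsNF) : (subst φ X χ).IsNF := by
  induction h with
  | tt => exact .tt
  | ff => exact .ff
  | var Y => by_cases hY : Y = X <;> simp [Frm.subst, hY, hχ, IsNF.var]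
  | conj n G k hdisj _ ih => exact .conj n G _ hdisj ih
  | max Y φ hfree _ ih =>
    by_cases hY : Y = X
    · simp only [Frm.subst, if_pos hY]
      exact .max Y φ hfree ‹_›
    · simp only [Frm.subst, if_neg hY]
      exact .max Y _ (by rw [fv_subst_of_closed hχc]; exact ⟨hfree, hY⟩) ih

theorem topMax_subst_of_gvar (χ : Frm Act) {X : ℕ} {φ : Frm Act} (h : gvar X φ) :
    topMax (subst φ X χ) = topMax φ := by
  induction φ with
  | var Y => simp [gvar] at h; simp [subst, h, topMax]
  | max Y φ ih =>
    by_cases hY : Y = X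
    · simp [subst, hY]
    · simp [subst, hY, topMax, ih (h.resolve_left hY)]
  | _ => simp [subst, topMax]

end Frm

open Enf.Frm

theorem TStep.fix_iff {x : ℕ} {e : Trn Act} {l : Option Act × Option Act} {e' : Trn Act} :
    TStep (.fix x e) l e' ↔ TStep (e.tsubst x (.fix x e)) l e' :=
  ⟨fun h => by cases h; assumption, TStep.fix⟩

theorem TStep.sel_iff {n : ℕ} {f : Fin n → Trn Act} {l : Option Act × Option Act}
    {e' : Trn Act} : TStep (.sel n f) l e' ↔ ∃ i, TStep (f i) l e' :=
  ⟨fun h => by cases h; exact ⟨_, ‹_›⟩, fun ⟨i, h⟩ => .sel i h⟩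

theorem TStep.prf_iff {G : Set (Option Act)} {out : Option Act → Option Act}
    {k : Option Act → Trn Act} {l : Option Act × Option Act} {e' : Trn Act} :
    TStep (.prf G out k) l e' ↔ ∃ γ ∈ G, l = (γ, out γ) ∧ e' = k γ :=
  ⟨fun h => by cases h; exact ⟨_, ‹_›, rfl, rfl⟩, fun ⟨_, h, hl, he⟩ => hl ▸ he ▸ .prf h⟩

theorem IStep.of_tstep_eq {L : LTS Act} {e₁ e₂ : Trn Act} (hT : TStep e₁ = TStep e₂)
    {p : L.S} {a : Act} {s : Trn Act × L.S} (h : IStep L (e₁, p) (some a) s) :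
    IStep L (e₂, p) (some a) s := by
  cases h with
  | trn htr hts => exact .trn htr (hT ▸ hts)
  | ins hts => exact .ins (hT ▸ hts)
  | ter htr hno hnoins => exact .ter htr (hT ▸ hno) (hT ▸ hnoins)

-- Formula variables are shifted by one in `synth`, so monitor variable `0` is never free there.
theorem tsubst_zero_synth (s : Trn Act) {φ : Frm Act} (hφ : φ.IsNF) :
    (synth φ).tsubst 0 s = synth φ := by
  induction hφ with
  | max Y φ _ _ ih => simp [synth, Trn.tsubst, ih]
  | _ => simp [synth, Trn.tsubst]

theorem synth_subst {χ : Frm Act} (hχ : χ ≠ .ff) (X : ℕ) (φ : Frm Act) :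
    synth (subst φ X χ) = (synth φ).tsubst (X + 1) (synth χ) := by
  induction φ with
  | tt | ff => rfl
  | var Y => by_cases h : Y = X <;> simp [subst, synth, Trn.tsubst, h]
  | conj n f ih => simp [subst, synth, Trn.tsubst, ih]
  | box G k ih =>
    simp only [subst, synth, Trn.tsubst, subst_eq_ff_iff hχ]
    congr 1
    funext γ
    rcases γ with _ | a
    · rfl
    · by_cases h : k a = .ff <;> simp [h, ih, Trn.tsubst]
  | max Y φ ih =>
    by_cases h : Y = X
    · simp [subst, synth, Trn.tsubst, h]
    · simp [subst, synth, Trn.tsubst, h, ih]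

theorem tstep_synth_max (X : ℕ) (ψ : Frm Act) :
    TStep (synth (.max X ψ)) = TStep (synth (subst ψ X (.max X ψ))) := by
  ext l e'
  rw [synth_subst (by simp) X ψ]
  exact TStep.fix_iff

theorem tstep_synth_conj_iff {n : ℕ} {G : Fin n → Set Act} {k : Fin n → Act → Frm Act}
    (hk : ∀ i, ∀ a ∈ G i, (k i a).IsNF) {l : Option Act × Option Act} {e' : Trn Act} :
    TStep (synth (.conj n fun i => .box (G i) (k i))) l e' ↔
      ∃ i, ∃ b ∈ G i, l = (some b, if k i b = .ff then none else some b) ∧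
        e' = if k i b = .ff then synth (.conj n fun i => .box (G i) (k i))
          else synth (k i b) := by
  simp only [synth, TStep.fix_iff, Trn.tsubst, TStep.sel_iff, TStep.prf_iff]
  constructor
  · rintro ⟨i, _, ⟨b, hb, rfl⟩, rfl, rfl⟩
    refine ⟨i, b, hb, rfl, ?_⟩
    by_cases h : k i b = .ff <;> simp [h, Trn.tsubst, tsubst_zero_synth _ (hk i b hb)]
  · rintro ⟨i, b, hb, rfl, rfl⟩
    refine ⟨i, some b, ⟨b, hb, rfl⟩, rfl, ?_⟩
    by_cases h : k i b = .ff <;> simp [h, Trn.tsubst, tsubst_zero_synth _ (hk i b hb)]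

theorem after_max {X : ℕ} {ψ : Frm Act} (hg : gvar X ψ) :
    after (.max X ψ) = after (subst ψ X (.max X ψ)) := by
  funext a
  rw [after, after, topMax_subst_of_gvar _ hg]
  rfl

theorem after_conj_of_mem {n : ℕ} {G : Fin n → Set Act} (k : Fin n → Act → Frm Act)
    (hdisj : ∀ i j : Fin n, i ≠ j → ∀ a : Act, a ∈ G i → a ∉ G j)
    {j : Fin n} {a : Act} (ha : a ∈ G j) :
    after (.conj n fun i => .box (G i) (k i)) a = k j a := by
  have h : ∃ i : Fin n, ∃ G' : Set Act, ∃ k' : Act → Frm Act,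
      Frm.box (G i) (k i) = Frm.box G' k' ∧ a ∈ G' := ⟨j, G j, k j, rfl, ha⟩
  simp only [after, afterFuel, dif_pos h]
  obtain ⟨hG, hk⟩ := Frm.box.inj h.choose_spec.choose_spec.choose_spec.1
  have hmem := h.choose_spec.choose_spec.choose_spec.2
  rw [← hG] at hmem
  obtain rfl : h.choose = j := by by_contra hne; exact hdisj _ j hne a hmem ha
  rw [← hk]

theorem after_conj_of_forall_not_mem {n : ℕ} {G : Fin n → Set Act}
    (k : Fin n → Act → Frm Act) {a : Act} (ha : ∀ i, a ∉ G i) :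
    after (.conj n fun i => .box (G i) (k i)) a = .tt := by
  have h : ¬ ∃ i : Fin n, ∃ G' : Set Act, ∃ k' : Act → Frm Act,
      Frm.box (G i) (k i) = Frm.box G' k' ∧ a ∈ G' := by
    rintro ⟨i, G', k', heq, hmem⟩
    exact ha i ((Frm.box.inj heq).1 ▸ hmem)
  simp only [after, afterFuel, dif_neg h]

inductive IsHNF : Frm Act → Prop
  | tt : IsHNF .tt
  | ff : IsHNF .ff
  | conj (n : ℕ) (G : Fin n → Set Act) (k : Fin n → Act → Frm Act)
      (hdisj : ∀ i j : Fin n, i ≠ j → ∀ a : Act, a ∈ G i → a ∉ G j)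
      (hk : ∀ i : Fin n, ∀ a ∈ G i, IsNF (k i a)) :
      IsHNF (.conj n fun i => .box (G i) (k i))

theorem exists_isHNF_unfolding (φ : Frm Act) (hc : φ.Closed) (hnf : φ.IsNF)
    (hg : φ.Guarded) :
    ∃ ψ, IsHNF ψ ∧ TStep (synth φ) = TStep (synth ψ) ∧ after φ = after ψ := by
  induction h : φ.topMax generalizing φ with
  | zero =>
    cases hnf with
    | tt => exact ⟨_, .tt, rfl, rfl⟩
    | ff => exact ⟨_, .ff, rfl, rfl⟩
    | var X => simp [Closed, fv] at hc
    | conj n G k hdisj hk => exact ⟨_, .conj n G k hdisj hk, rfl, rfl⟩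
    | max => simp [topMax] at h
  | succ m ih =>
    cases hnf with
    | max X ψ hfree hψ =>
      obtain ⟨hgX, hgψ⟩ := hg
      obtain ⟨χ, hχ, hT, hA⟩ := ih (subst ψ X (.max X ψ))
        ((fv_subst_of_closed hc X ψ).trans hc)
        (IsNF.subst hc (.max X ψ hfree hψ) X hψ)
        (Guarded.subst hc ⟨hgX, hgψ⟩ X hgψ)
        (by simpa [topMax, topMax_subst_of_gvar _ hgX] using h)
      exact ⟨χ, hχ, (tstep_synth_max X ψ).trans hT, (after_max hgX).trans hA⟩
    | _ => simp [topMax] at h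

theorem IStep.id_some {L : LTS Act} {p p' : L.S} {a : Act} {e' : Trn Act}
    (h : IStep L (.id, p) (some a) (e', p')) : L.Tr p (some a) p' ∧ e' = .id := by
  cases h with
  | trn htr hts => cases hts; exact ⟨htr, rfl⟩
  | ins hts => cases hts
  | ter htr => exact ⟨htr, rfl⟩

theorem IsHNF.visible_step_residual {L : LTS Act} {ψ : Frm Act} (hψ : IsHNF ψ)
    {p p' : L.S} {e' : Trn Act} {a : Act} (h : IStep L (synth ψ, p) (some a) (e', p')) :
    L.Tr p (some a) p' ∧ e' = synth (after ψ a) := by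
  cases hψ with
  | tt | ff => exact IStep.id_some h
  | conj n G k hdisj hk =>
    cases h with
    | trn htr hts =>
      obtain ⟨i, b, hb, hl, rfl⟩ := (tstep_synth_conj_iff hk).1 hts
      by_cases hff : k i b = .ff
      · simp [hff] at hl
      · obtain ⟨rfl, rfl⟩ : _ = b ∧ a = b := by simpa [hff] using hl
        exact ⟨htr, by simp [hff, after_conj_of_mem k hdisj hb]⟩
    | ins hts =>
      obtain ⟨i, b, -, hl, -⟩ := (tstep_synth_conj_iff hk).1 hts
      simp at hl
    | ter htr hno =>
      refine ⟨htr, ?_⟩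
      by_cases hmem : ∃ i, a ∈ G i
      · obtain ⟨i, hi⟩ := hmem
        exact absurd ((tstep_synth_conj_iff hk).2 ⟨i, a, hi, rfl, rfl⟩) (hno _ _)
      · rw [after_conj_of_forall_not_mem k (not_exists.1 hmem)]
        rfl

/-- visible steps of the monitored system determine the residual
monitor: for closed guarded SHMLnf φ, if ⟦φ⟧e[p] -a-> e'[p'] then p -a-> p' and
e' = ⟦after(φ, a)⟧e. -/
theorem visible_step_residual (Act : Type) (L : LTS Act) (φ : Frm Act)
    (hclosed : φ.Closed) (hnf : φ.IsNF) (hguard : φ.Guarded)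
    (p p' : L.S) (e' : Trn Act) (a : Act)
    (hstep : IStep L (synth φ, p) (some a) (e', p')) :
    L.Tr p (some a) p' ∧ e' = synth (after φ a) := by
  obtain ⟨ψ, hψ, hT, hA⟩ := exists_isHNF_unfolding φ hclosed hnf hguard
  rw [hA]
  exact hψ.visible_step_residual (hstep.of_tstep_eq hT)

end Enf
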